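/- arXiv:2206.12024 — 2 statements merged into one kernel-verified Lean document; each statement's English description precedes it below -/
import Mathlib

section
/- Let 0 < p ≤ 1 and q > 1 and let μ be a positive Borel measure on [0,1) which is a 1/p-Carleson measure. If there is C > 0 such that |∫_{[0,1)} conj(f(t)) (g(t) + t g'(t)) dμ(t)| ≤ C ||f||_{H^p} ||g||_{H^{q'}} for all f ∈ H^p and g ∈ H^{q'} (where 1/q + 1/q' = 1), then μ is a (1/p + 1/q' + 1)-Carleson measure. -/
open MeasureTheory Metric Set Complex

/-- The integral mean `M_p(r,f)`. -/
noncomputable def Mp (p : ℝ) (f : ℂ → ℂ) (r : ℝ) : ℝ :=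
  ((1 / (2 * Real.pi)) * ∫ θ in (0:ℝ)..(2 * Real.pi),
      ‖f (r * Complex.exp (θ * Complex.I))‖ ^ p) ^ (1 / p)

/-- The Hardy space norm `‖f‖_{H^p} = sup_{0<r<1} M_p(r,f)`. -/
noncomputable def hardyNorm (p : ℝ) (f : ℂ → ℂ) : ℝ :=
  ⨆ r : Set.Ioo (0:ℝ) 1, Mp p f (r : ℝ)

/-- Membership in the Hardy space `H^p` on the unit disc. -/
def MemHp (p : ℝ) (f : ℂ → ℂ) : Prop :=
  AnalyticOnNhd ℂ f (Metric.ball 0 1) ∧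
    BddAbove (Set.range fun r : Set.Ioo (0:ℝ) 1 => Mp p f (r : ℝ))

/-- `μ` is an `s`-Carleson measure on `[0,1)`. -/
def IsCarleson (s : ℝ) (μ : Measure ℝ) : Prop :=
  ∃ C > 0, ∀ t ∈ Set.Ico (0:ℝ) 1, μ (Set.Ico t 1) ≤ ENNReal.ofReal (C * (1 - t) ^ s)

/-- `μ` is a vanishing `s`-Carleson measure on `[0,1)`. -/
def IsVanishingCarleson (s : ℝ) (μ : Measure ℝ) : Prop :=
  ∀ ε > 0, ∃ δ ∈ Set.Ico (0:ℝ) 1, ∀ t ∈ Set.Ico δ 1,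
    μ (Set.Ico t 1) ≤ ENNReal.ofReal (ε * (1 - t) ^ s)

/-- The moments `μ_n = ∫_{[0,1)} t^n dμ(t)`. -/
noncomputable def moment (μ : Measure ℝ) (n : ℕ) : ℝ :=
  ∫ t in Set.Ico (0:ℝ) 1, t ^ n ∂μ

/-!
Test the form on `f_b(z) = (1 - b²)^{1/s} (1 - b z)^{-2/s}` with `1/2 ≤ b < 1`. Since `|f_b|^s` is
`1 - b²` times the Poisson kernel at `b`, `‖f_b‖_{H^s} ≤ 1`. For `f = f_b ∈ H^p` and
`g = f_b ∈ H^{q'}` the integrand is real and nonnegative on `[0, 1)`, and on `[b, 1)` it is at least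
`(2b²/q') (1 - b²)^{-(1/p + 1/q' + 1)}`; hence `μ([b, 1)) ≲ (1 - b)^{1/p + 1/q' + 1}`.
-/

open scoped ComplexConjugate

lemma mul_measureReal_le_setIntegral {α : Type*} [MeasurableSpace α] {μ : Measure α}
    {f : α → ℝ} {s t : Set α} {m : ℝ} (hts : t ⊆ s) (hs : MeasurableSet s) (ht : MeasurableSet t)
    (hμt : μ t ≠ ⊤) (hf : IntegrableOn f s μ) (hf0 : ∀ x ∈ s, 0 ≤ f x)
    (hm : ∀ x ∈ t, m ≤ f x) : m * μ.real t ≤ ∫ x in s, f x ∂μ :=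
  (setIntegral_ge_of_const_le_real ht hμt hm (hf.mono_set hts)).trans
    (setIntegral_mono_set hf (ae_restrict_of_forall_mem hs hf0) hts.eventuallyLE)

lemma IsCarleson.measure_Ico_ne_top {s : ℝ} {μ : Measure ℝ} (hμ : IsCarleson s μ) :
    μ (Ico 0 1) ≠ ⊤ := by
  obtain ⟨C, -, hC⟩ := hμ
  exact ne_top_of_le_ne_top ENNReal.ofReal_ne_top (hC 0 ⟨le_rfl, zero_lt_one⟩)

lemma isCarleson_of_measureReal_le {s δ K : ℝ} {μ : Measure ℝ} (hfin : μ (Ico 0 1) ≠ ⊤)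
    (hs : 0 ≤ s) (hδ : δ < 1) (hK : 0 < K)
    (hbound : ∀ t ∈ Ico δ 1, μ.real (Ico t 1) ≤ K * (1 - t) ^ s) : IsCarleson s μ := by
  have hδs : 0 < (1 - δ) ^ s := Real.rpow_pos_of_pos (by linarith) s
  refine ⟨μ.real (Ico 0 1) / (1 - δ) ^ s + K, by positivity, fun t ht => ?_⟩
  have hfin_t : μ (Ico t 1) ≠ ⊤ :=
    ne_top_of_le_ne_top hfin (measure_mono (Ico_subset_Ico_left ht.1))
  have hts : 0 ≤ (1 - t) ^ s := Real.rpow_nonneg (by linarith [ht.2]) s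
  rw [ENNReal.le_ofReal_iff_toReal_le hfin_t (by positivity), ← measureReal_def, add_mul]
  rcases lt_or_ge t δ with htδ | htδ
  · calc μ.real (Ico t 1) ≤ μ.real (Ico 0 1) := measureReal_mono (Ico_subset_Ico_left ht.1) hfin
      _ ≤ μ.real (Ico 0 1) / (1 - δ) ^ s * (1 - t) ^ s := by
        rw [div_mul_eq_mul_div, le_div_iff₀ hδs]
        exact mul_le_mul_of_nonneg_left
          (Real.rpow_le_rpow (by linarith) (by linarith) hs) measureReal_nonneg
      _ ≤ _ := le_add_of_nonneg_right (by positivity)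
  · exact (hbound t ⟨htδ, ht.2⟩).trans (le_add_of_nonneg_left (by positivity))

lemma Mp_nonneg (p : ℝ) (f : ℂ → ℂ) (r : ℝ) : 0 ≤ Mp p f r :=
  Real.rpow_nonneg (mul_nonneg (by positivity)
    (intervalIntegral.integral_nonneg (by positivity) fun _ _ => by positivity)) _

lemma hardyNorm_nonneg (p : ℝ) (f : ℂ → ℂ) : 0 ≤ hardyNorm p f :=
  Real.iSup_nonneg fun _ => Mp_nonneg _ _ _

lemma integral_inv_norm_circleMap_sub_sq {a : ℂ} (ha : ‖a‖ < 1) :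
    ∫ θ in (0:ℝ)..2 * Real.pi, (‖circleMap 0 1 θ - a‖ ^ 2)⁻¹ = 2 * Real.pi / (1 - ‖a‖ ^ 2) := by
  have hpoisson := (InnerProductSpace.harmonicOnNhd_const (1 : ℝ)).circleAverage_poissonKernel_smul
    (c := 0) (R := 1) (w := a) (by simpa using ha)
  have hkernel : ∀ θ : ℝ, (poissonKernel 0 a • fun _ : ℂ => (1 : ℝ)) (circleMap 0 1 θ) =
      (1 - ‖a‖ ^ 2) * (‖circleMap 0 1 θ - a‖ ^ 2)⁻¹ := by
    intro θ
    simp [poissonKernel, div_eq_mul_inv]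
  have ha2 : 1 - ‖a‖ ^ 2 ≠ 0 := by nlinarith [norm_nonneg a]
  rw [Real.circleAverage_def, smul_eq_mul, intervalIntegral.integral_congr (fun θ _ => hkernel θ),
    intervalIntegral.integral_const_mul, inv_mul_eq_iff_eq_mul₀ (by positivity), mul_one]
    at hpoisson
  rw [eq_div_iff ha2, mul_comm, hpoisson]

lemma norm_one_sub_mul_eq_norm_sub_conj (a : ℂ) {w : ℂ} (hw : ‖w‖ = 1) :
    ‖1 - a * w‖ = ‖w - conj a‖ := by
  have hw0 : w ≠ 0 := norm_ne_zero_iff.mp (by rw [hw]; exact one_ne_zero)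
  calc ‖1 - a * w‖ = ‖w * (conj w - a)‖ := by
        rw [← inv_eq_conj hw, mul_sub, mul_inv_cancel₀ hw0, mul_comm]
    _ = ‖w - conj a‖ := by
        rw [norm_mul, hw, one_mul, ← Complex.norm_conj, map_sub, conj_conj]

noncomputable def hardyTestFn (b s : ℝ) (z : ℂ) : ℂ :=
  ((1 - b ^ 2) ^ (1 / s) : ℝ) * (1 - b * z) ^ ((-2 / s : ℝ) : ℂ)

section hardyTestFn

variable {b s : ℝ}

lemma norm_hardyTestFn_rpow (hs : 0 < s) (hb : |b| < 1) {z : ℂ} (hz : (b : ℂ) * z ≠ 1) :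
    ‖hardyTestFn b s z‖ ^ s = (1 - b ^ 2) / ‖1 - b * z‖ ^ 2 := by
  have hb2 : 0 ≤ 1 - b ^ 2 := by nlinarith [sq_abs b, abs_nonneg b]
  have hz' : 0 < ‖1 - b * z‖ := norm_pos_iff.mpr (sub_ne_zero.mpr hz.symm)
  rw [hardyTestFn, norm_mul, norm_real, Real.norm_of_nonneg (by positivity), norm_cpow_real,
    Real.mul_rpow (by positivity) (by positivity), ← Real.rpow_mul hb2, ← Real.rpow_mul hz'.le,
    one_div_mul_cancel hs.ne', div_mul_cancel₀ _ hs.ne', Real.rpow_one, div_eq_mul_inv,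
    Real.rpow_neg hz'.le]
  norm_cast

lemma Mp_hardyTestFn_le_one (hs : 0 < s) (hb : |b| < 1) {r : ℝ} (hr : |r| ≤ 1) :
    Mp s (hardyTestFn b s) r ≤ 1 := by
  have hbr : ‖((b * r : ℝ) : ℂ)‖ < 1 := by
    rw [norm_real, Real.norm_eq_abs, abs_mul]
    nlinarith [abs_nonneg b, abs_nonneg r]
  have hpoint : ∀ θ : ℝ, ‖hardyTestFn b s (r * exp (θ * I))‖ ^ s =
      (1 - b ^ 2) * (‖circleMap 0 1 θ - ((b * r : ℝ) : ℂ)‖ ^ 2)⁻¹ := by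
    intro θ
    have hcirc : ‖circleMap 0 1 θ‖ = 1 := by simp
    have hprod : (b : ℂ) * (r * exp (θ * I)) = ((b * r : ℝ) : ℂ) * circleMap 0 1 θ := by
      simp only [ofReal_mul, circleMap_zero, ofReal_one, one_mul]; ring
    have hne : ((b * r : ℝ) : ℂ) * circleMap 0 1 θ ≠ 1 := fun h => by
      have := congrArg norm h
      rw [norm_mul, hcirc, mul_one, norm_one] at this
      exact hbr.ne this
    rw [norm_hardyTestFn_rpow hs hb (hprod ▸ hne), hprod,
      norm_one_sub_mul_eq_norm_sub_conj _ hcirc, conj_ofReal, div_eq_mul_inv]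
  have hbr2 : (b * r) ^ 2 < 1 := by
    rw [norm_real, Real.norm_eq_abs] at hbr; nlinarith [sq_abs (b * r), abs_nonneg (b * r)]
  have hb2 : 0 ≤ 1 - b ^ 2 := by nlinarith [sq_abs b, abs_nonneg b]
  have hmean : 1 / (2 * Real.pi) * ((1 - b ^ 2) * (2 * Real.pi / (1 - (b * r) ^ 2))) =
      (1 - b ^ 2) / (1 - (b * r) ^ 2) := by
    field_simp
  rw [Mp, intervalIntegral.integral_congr (fun θ _ => hpoint θ),
    intervalIntegral.integral_const_mul, integral_inv_norm_circleMap_sub_sq hbr,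
    norm_real, Real.norm_eq_abs, sq_abs, hmean]
  refine Real.rpow_le_one (div_nonneg hb2 (by linarith)) ?_ (by positivity)
  rw [div_le_one (by linarith), mul_pow]
  have hr2 : r ^ 2 ≤ 1 := by nlinarith [sq_abs r, abs_nonneg r]
  nlinarith [mul_le_mul_of_nonneg_left hr2 (sq_nonneg b)]

lemma hardyTestFn_memHp (hs : 0 < s) (hb : |b| < 1) : MemHp s (hardyTestFn b s) := by
  refine ⟨fun z hz => ?_, ⟨1, ?_⟩⟩
  · have hbz : ‖-((b : ℂ) * z)‖ < 1 := by
      rw [norm_neg, norm_mul, norm_real, Real.norm_eq_abs]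
      rw [mem_ball_zero_iff] at hz
      nlinarith [abs_nonneg b, norm_nonneg z]
    have hslit : 1 - (b : ℂ) * z ∈ slitPlane := by
      simpa [sub_eq_add_neg] using mem_slitPlane_of_norm_lt_one hbz
    exact analyticAt_const.mul
      ((analyticAt_const.sub (analyticAt_const.mul analyticAt_id)).cpow analyticAt_const hslit)
  · rintro _ ⟨r, rfl⟩
    exact Mp_hardyTestFn_le_one hs hb (abs_le.mpr ⟨by linarith [r.2.1], r.2.2.le⟩)

lemma hardyNorm_hardyTestFn_le_one (hs : 0 < s) (hb : |b| < 1) :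
    hardyNorm s (hardyTestFn b s) ≤ 1 :=
  Real.iSup_le (fun r => Mp_hardyTestFn_le_one hs hb (abs_le.mpr ⟨by linarith [r.2.1], r.2.2.le⟩))
    zero_le_one

lemma hardyTestFn_ofReal {τ : ℝ} (hbτ : b * τ < 1) :
    hardyTestFn b s τ = ((1 - b ^ 2) ^ (1 / s) * (1 - b * τ) ^ (-2 / s) : ℝ) := by
  rw [hardyTestFn, ofReal_mul, ofReal_cpow (x := 1 - b * τ) (by linarith)]
  push_cast
  rfl

lemma hasDerivAt_hardyTestFn_ofReal {τ : ℝ} (hbτ : b * τ < 1) :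
    HasDerivAt (hardyTestFn b s)
      ((1 - b ^ 2) ^ (1 / s) * (2 * b / s) * (1 - b * τ) ^ (-2 / s - 1) : ℝ) τ := by
  have hslit : 1 - (b : ℂ) * τ ∈ slitPlane := by
    rw [← ofReal_one, ← ofReal_mul, ← ofReal_sub, ofReal_mem_slitPlane]; linarith
  have hlin : HasDerivAt (fun z : ℂ => 1 - b * z) (-b) τ := by
    simpa using ((hasDerivAt_id (τ : ℂ)).const_mul (b : ℂ)).const_sub 1
  refine ((hlin.cpow_const hslit).const_mul (((1 - b ^ 2) ^ (1 / s) : ℝ) : ℂ)).congr_deriv ?_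
  rw [ofReal_mul, ofReal_mul, ofReal_cpow (x := 1 - b * τ) (by linarith)]
  push_cast
  ring_nf

end hardyTestFn

noncomputable def derivHilbertForm (μ : Measure ℝ) (f g : ℂ → ℂ) : ℂ :=
  ∫ t in Ico (0:ℝ) 1, conj (f t) * (g t + t * deriv g t) ∂μ

noncomputable def hardyTestDensity (b p q τ : ℝ) : ℝ :=
  (1 - b ^ 2) ^ (1 / p + 1 / q) * (1 - b * τ) ^ (-(2 / p + 2 / q + 1)) * (1 - b * τ + 2 * b * τ / q)

section hardyTestDensity

variable {b p q : ℝ}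

lemma conj_hardyTestFn_mul_eq_hardyTestDensity (hb : b ^ 2 < 1) {τ : ℝ} (hbτ : b * τ < 1) :
    conj (hardyTestFn b p τ) * (hardyTestFn b q τ + τ * deriv (hardyTestFn b q) τ) =
      hardyTestDensity b p q τ := by
  have hu : 0 < 1 - b * τ := by linarith
  rw [hardyTestFn_ofReal hbτ, hardyTestFn_ofReal hbτ, (hasDerivAt_hardyTestFn_ofReal hbτ).deriv,
    conj_ofReal, hardyTestDensity, Real.rpow_add (by linarith),
    show -(2 / p + 2 / q + 1) = -2 / p + (-2 / q - 1) by ring, Real.rpow_add hu,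
    show -2 / q = (-2 / q - 1) + 1 by ring, Real.rpow_add hu, Real.rpow_one]
  push_cast
  ring_nf

lemma continuousOn_hardyTestDensity (hb : |b| < 1) :
    ContinuousOn (hardyTestDensity b p q) (Icc 0 1) := by
  have hu : ∀ τ ∈ Icc (0:ℝ) 1, 1 - b * τ ≠ 0 := fun τ hτ => by
    nlinarith [le_abs_self b, abs_nonneg b, hτ.1, hτ.2]
  have hlin : ContinuousOn (fun τ : ℝ => 1 - b * τ) (Icc 0 1) := by fun_prop
  exact (continuousOn_const.mul (hlin.rpow_const fun τ hτ => Or.inl (hu τ hτ))).mul (by fun_prop)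

lemma hardyTestDensity_nonneg (hb0 : 0 ≤ b) (hb1 : b < 1) (hq : 0 < q) {τ : ℝ}
    (hτ : τ ∈ Icc 0 1) : 0 ≤ hardyTestDensity b p q τ := by
  have hu : 0 < 1 - b * τ := by nlinarith [hτ.1, hτ.2]
  have hb2 : 0 ≤ 1 - b ^ 2 := by nlinarith
  have hτ0 := hτ.1
  exact mul_nonneg (mul_nonneg (Real.rpow_nonneg hb2 _) (Real.rpow_nonneg hu.le _))
    (add_nonneg hu.le (by positivity))

lemma le_hardyTestDensity (hb0 : 0 ≤ b) (hb1 : b < 1) (hp : 0 < p) (hq : 0 < q) {τ : ℝ}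
    (hτ : τ ∈ Ico b 1) :
    2 * b ^ 2 / q * (1 - b ^ 2) ^ (-(1 / p + 1 / q + 1)) ≤ hardyTestDensity b p q τ := by
  have hu : 0 < 1 - b * τ := by nlinarith [hτ.1, hτ.2]
  have hub : 1 - b * τ ≤ 1 - b ^ 2 := by nlinarith [hτ.1]
  have hb2 : 0 < 1 - b ^ 2 := by nlinarith
  calc 2 * b ^ 2 / q * (1 - b ^ 2) ^ (-(1 / p + 1 / q + 1))
      = (1 - b ^ 2) ^ (1 / p + 1 / q) * (1 - b ^ 2) ^ (-(2 / p + 2 / q + 1)) * (2 * b ^ 2 / q) := by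
        rw [← Real.rpow_add hb2]; ring_nf
    _ ≤ (1 - b ^ 2) ^ (1 / p + 1 / q) * (1 - b * τ) ^ (-(2 / p + 2 / q + 1)) *
          (1 - b * τ + 2 * b * τ / q) := by
        gcongr (1 - b ^ 2) ^ _ * ?_ * ?_
        · exact Real.rpow_le_rpow_of_nonpos hu hub (neg_nonpos.mpr (by positivity))
        · have : 2 * b ^ 2 / q ≤ 2 * b * τ / q :=
            div_le_div_of_nonneg_right (by nlinarith [hτ.1]) hq.le
          linarith

end hardyTestDensity

lemma measureReal_Ico_le_norm_derivHilbertForm {μ : Measure ℝ} {b p q : ℝ} (hb0 : 0 < b)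
    (hb1 : b < 1) (hp : 0 < p) (hq : 0 < q) (hfin : μ (Ico 0 1) ≠ ⊤) :
    μ.real (Ico b 1) ≤ q / (2 * b ^ 2) * (1 - b ^ 2) ^ (1 / p + 1 / q + 1) *
      ‖derivHilbertForm μ (hardyTestFn b p) (hardyTestFn b q)‖ := by
  have hb : |b| < 1 := abs_lt.mpr ⟨by linarith, hb1⟩
  have hform : derivHilbertForm μ (hardyTestFn b p) (hardyTestFn b q) =
      ∫ τ in Ico 0 1, hardyTestDensity b p q τ ∂μ := by
    rw [derivHilbertForm, ← integral_complex_ofReal]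
    refine setIntegral_congr_fun measurableSet_Ico fun τ hτ => ?_
    exact conj_hardyTestFn_mul_eq_hardyTestDensity (by nlinarith) (by nlinarith [hτ.1, hτ.2])
  have hlower := mul_measureReal_le_setIntegral (Ico_subset_Ico_left hb0.le) measurableSet_Ico
    measurableSet_Ico (ne_top_of_le_ne_top hfin (measure_mono (Ico_subset_Ico_left hb0.le)))
    ((continuousOn_hardyTestDensity hb).integrableOn_of_subset_isCompact isCompact_Icc
      measurableSet_Ico Ico_subset_Icc_self hfin)
    (fun τ hτ => hardyTestDensity_nonneg hb0.le hb1 hq (Ico_subset_Icc_self hτ))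
    (fun τ hτ => le_hardyTestDensity hb0.le hb1 hp hq hτ)
  have hb2 : 0 < 1 - b ^ 2 := by nlinarith
  calc μ.real (Ico b 1)
      ≤ (∫ τ in Ico 0 1, hardyTestDensity b p q τ ∂μ) /
          (2 * b ^ 2 / q * (1 - b ^ 2) ^ (-(1 / p + 1 / q + 1))) :=
        (le_div_iff₀' (by positivity)).mpr hlower
    _ = q / (2 * b ^ 2) * (1 - b ^ 2) ^ (1 / p + 1 / q + 1) *
          ∫ τ in Ico 0 1, hardyTestDensity b p q τ ∂μ := by
        rw [Real.rpow_neg hb2.le]; field_simp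
    _ ≤ _ := by
        rw [hform, norm_real, Real.norm_eq_abs]
        gcongr
        exact le_abs_self _

lemma measureReal_Ico_le_of_norm_derivHilbertForm_le {μ : Measure ℝ} {p q C t : ℝ}
    (ht : t ∈ Ico (1 / 2) 1) (hp : 0 < p) (hq : 0 < q) (hfin : μ (Ico 0 1) ≠ ⊤)
    (hC : ‖derivHilbertForm μ (hardyTestFn t p) (hardyTestFn t q)‖ ≤ C) :
    μ.real (Ico t 1) ≤ C * (2 * q) * 2 ^ (1 / p + 1 / q + 1) * (1 - t) ^ (1 / p + 1 / q + 1) := by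
  obtain ⟨ht_half, ht1⟩ := ht
  have ht2 : 1 / 4 ≤ t ^ 2 := by nlinarith
  have ht2' : 0 ≤ 1 - t ^ 2 := by nlinarith
  calc μ.real (Ico t 1)
      ≤ q / (2 * t ^ 2) * (1 - t ^ 2) ^ (1 / p + 1 / q + 1) *
          ‖derivHilbertForm μ (hardyTestFn t p) (hardyTestFn t q)‖ :=
        measureReal_Ico_le_norm_derivHilbertForm (by linarith) ht1 hp hq hfin
    _ ≤ 2 * q * (2 * (1 - t)) ^ (1 / p + 1 / q + 1) * C := by
        gcongr
        · rw [div_le_iff₀ (by positivity)]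
          nlinarith [mul_le_mul_of_nonneg_left ht2 hq.le]
        · nlinarith
    _ = C * (2 * q) * 2 ^ (1 / p + 1 / q + 1) * (1 - t) ^ (1 / p + 1 / q + 1) := by
        rw [Real.mul_rpow (by norm_num) (by linarith)]; ring

lemma norm_derivHilbertForm_hardyTestFn_le {μ : Measure ℝ} {p q C b : ℝ} (hp : 0 < p)
    (hq : 0 < q) (hb : |b| < 1) (hC : 0 ≤ C)
    (hbound : ∀ f g, MemHp p f → MemHp q g →
      ‖derivHilbertForm μ f g‖ ≤ C * hardyNorm p f * hardyNorm q g) :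
    ‖derivHilbertForm μ (hardyTestFn b p) (hardyTestFn b q)‖ ≤ C :=
  calc ‖derivHilbertForm μ (hardyTestFn b p) (hardyTestFn b q)‖
      ≤ C * hardyNorm p (hardyTestFn b p) * hardyNorm q (hardyTestFn b q) :=
        hbound _ _ (hardyTestFn_memHp hp hb) (hardyTestFn_memHp hq hb)
    _ ≤ C * 1 * 1 := by
        gcongr
        exacts [hardyNorm_nonneg _ _, hardyNorm_hardyTestFn_le_one hp hb,
          hardyNorm_hardyTestFn_le_one hq hb]
    _ = C := by ring

theorem stmt12_general (p q q' : ℝ) (hp0 : 0 < p) (hq : 1 < q)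
    (hqq' : 1 / q + 1 / q' = 1) (μ : Measure ℝ) (hμ : IsCarleson (1 / p) μ)
    (hbdd : ∃ C > 0, ∀ (f g : ℂ → ℂ), MemHp p f → MemHp q' g →
      ‖∫ t in Set.Ico (0:ℝ) 1,
          (starRingEnd ℂ) (f t) * (g t + (t : ℂ) * deriv g t) ∂μ‖ ≤
        C * hardyNorm p f * hardyNorm q' g) :
    IsCarleson (1 / p + 1 / q' + 1) μ := by
  obtain ⟨C, hC, hbound⟩ := hbdd
  have hq' : 0 < q' := by
    have : 1 / q < 1 := (div_lt_one (by linarith)).mpr hq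
    exact one_div_pos.mp (by linarith)
  have hfin := hμ.measure_Ico_ne_top
  refine isCarleson_of_measureReal_le (δ := 1 / 2) hfin (by positivity) (by norm_num)
    (by positivity : 0 < C * (2 * q') * 2 ^ (1 / p + 1 / q' + 1)) fun t ht => ?_
  have ht_abs : |t| < 1 := abs_lt.mpr ⟨by linarith [ht.1], ht.2⟩
  exact measureReal_Ico_le_of_norm_derivHilbertForm_le ht hp0 hq' hfin
    (norm_derivHilbertForm_hardyTestFn_le hp0 hq' ht_abs hC.le hbound)

theorem stmt12 (p q q' : ℝ) (hp0 : 0 < p) (hp1 : p ≤ 1) (hq : 1 < q)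
    (hqq' : 1 / q + 1 / q' = 1) (μ : Measure ℝ) (hμ : IsCarleson (1 / p) μ)
    (hbdd : ∃ C > 0, ∀ (f g : ℂ → ℂ), MemHp p f → MemHp q' g →
      ‖∫ t in Set.Ico (0:ℝ) 1,
          (starRingEnd ℂ) (f t) * (g t + (t : ℂ) * deriv g t) ∂μ‖ ≤
        C * hardyNorm p f * hardyNorm q' g) :
    IsCarleson (1 / p + 1 / q' + 1) μ :=
  stmt12_general p q q' hp0 hq hqq' μ hμ hbdd
end

section
/- Let μ be a positive Borel measure on [0,1) with moments μ_m = ∫ t^m dμ(t) satisfying μ_m ≤ C/(m+1)^2 for all m ≥ 0 (which holds when μ is a 2-Carleson measure). Then the Derivative-Hilbert operator DH_μ is bounded on H^2: for f(z) = Σ a_k z^k ∈ H^2, Σ_{n≥0} (n+1)^2 |Σ_{k≥0} μ_{n+k} a_k|^2 ≤ C' Σ_{k≥0} |a_k|^2. -/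
open MeasureTheory Metric Set Complex

open Finset
open scoped ENNReal

/-! The moment bound gives `(n + 1) μ_{n+k} ≤ C / (n + k + 1)`, so the weighted sequence
`(n + 1) (DH_μ a)_n` is dominated termwise by `C` times the Hilbert matrix applied to `|a|`.
Hilbert's inequality (with constant `16` instead of `π²`) then finishes the proof. It is proved by
the Schur test with the weights `(k + 1)^{-1/2}`: the row sums
`∑ₖ (n + k + 1)⁻¹ (k + 1)^{-1/2}` are at most `4 (n + 1)^{-1/2}`, as one sees by splitting at `k = n`
and comparing both pieces with telescoping sums of square roots. -/

lemma inv_sqrt_add_one_le_two_mul_sub {a : ℝ} (ha : 0 ≤ a) :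
    (√(a + 1))⁻¹ ≤ 2 * (√(a + 1) - √a) := by
  have h1 : 0 < √(a + 1) := Real.sqrt_pos.2 (by linarith)
  rw [inv_le_iff_one_le_mul₀' h1]
  have : √a * √(a + 1) ≤ (a + (a + 1)) / 2 := by
    nlinarith [sq_nonneg (√a - √(a + 1)), Real.sq_sqrt ha, Real.sq_sqrt (by linarith : 0 ≤ a + 1)]
  nlinarith [Real.sq_sqrt (by linarith : 0 ≤ a + 1)]

lemma inv_add_one_mul_sqrt_le_two_mul_sub {a : ℝ} (ha : 0 < a) :
    ((a + 1) * √a)⁻¹ ≤ 2 * ((√a)⁻¹ - (√(a + 1))⁻¹) := by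
  have h0 : 0 < √a := Real.sqrt_pos.2 ha
  have h1 : 0 < √(a + 1) := Real.sqrt_pos.2 (by linarith)
  calc ((a + 1) * √a)⁻¹ = (√(a + 1))⁻¹ * (√a * √(a + 1))⁻¹ := by
        field_simp; rw [Real.sq_sqrt (by linarith)]
    _ ≤ 2 * (√(a + 1) - √a) * (√a * √(a + 1))⁻¹ := by
        gcongr; exact inv_sqrt_add_one_le_two_mul_sub ha.le
    _ = 2 * ((√a)⁻¹ - (√(a + 1))⁻¹) := by field_simp

lemma sum_range_inv_sqrt_le (m : ℕ) : ∑ k ∈ range m, (√((k : ℝ) + 1))⁻¹ ≤ 2 * √m := by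
  calc ∑ k ∈ range m, (√((k : ℝ) + 1))⁻¹
      ≤ ∑ k ∈ range m, (2 * √((k + 1 : ℕ) : ℝ) - 2 * √(k : ℝ)) := by
        gcongr with k
        push_cast
        linarith [inv_sqrt_add_one_le_two_mul_sub (Nat.cast_nonneg (α := ℝ) k)]
    _ = 2 * √m := by rw [sum_range_sub (fun k : ℕ => 2 * √(k : ℝ))]; simp

lemma sum_range_inv_add_one_mul_sqrt_le {x : ℝ} (hx : 0 < x) (N : ℕ) :
    ∑ j ∈ range N, ((x + j + 1) * √(x + j))⁻¹ ≤ 2 * (√x)⁻¹ := by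
  set f : ℕ → ℝ := fun j => 2 * (√(x + j))⁻¹
  calc ∑ j ∈ range N, ((x + j + 1) * √(x + j))⁻¹ ≤ ∑ j ∈ range N, (f j - f (j + 1)) := by
        gcongr with j
        simp only [f]
        push_cast
        rw [← add_assoc, ← mul_sub]
        exact inv_add_one_mul_sqrt_le_two_mul_sub (by positivity)
    _ = f 0 - f N := sum_range_sub' f N
    _ ≤ f 0 := sub_le_self _ (by positivity)
    _ = 2 * (√x)⁻¹ := by simp [f]

lemma sum_range_inv_add_mul_inv_sqrt_le (n N : ℕ) :
    ∑ k ∈ range N, ((n : ℝ) + k + 1)⁻¹ * (√((k : ℝ) + 1))⁻¹ ≤ 4 * (√((n : ℝ) + 1))⁻¹ := by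
  set t : ℕ → ℝ := fun k => ((n : ℝ) + k + 1)⁻¹ * (√((k : ℝ) + 1))⁻¹
  have head : ∑ k ∈ range (n + 1), ((n : ℝ) + 1)⁻¹ * (√((k : ℝ) + 1))⁻¹ ≤
      2 * (√((n : ℝ) + 1))⁻¹ := by
    rw [← mul_sum]
    calc _ ≤ ((n : ℝ) + 1)⁻¹ * (2 * √((n + 1 : ℕ) : ℝ)) := by
          gcongr; exact sum_range_inv_sqrt_le _
      _ = _ := by
        push_cast
        field_simp
        rw [Real.sq_sqrt (by positivity)]
  calc ∑ k ∈ range N, t k ≤ ∑ k ∈ range ((n + 1) + N), t k :=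
        sum_le_sum_of_subset_of_nonneg (range_mono (by omega)) fun k _ _ => by positivity
    _ = ∑ k ∈ range (n + 1), t k + ∑ j ∈ range N, t (n + 1 + j) := sum_range_add t _ _
    _ ≤ ∑ k ∈ range (n + 1), ((n : ℝ) + 1)⁻¹ * (√((k : ℝ) + 1))⁻¹ +
          ∑ j ∈ range N, (((n : ℝ) + 1 + j + 1) * √((n : ℝ) + 1 + j))⁻¹ := by
        have := Nat.cast_nonneg (α := ℝ) n
        gcongr with k _ j
        · simp only [t]; gcongr; linarith [Nat.cast_nonneg (α := ℝ) k]
        · simp only [t]; push_cast; rw [mul_inv]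
          gcongr ?_⁻¹ * (√?_)⁻¹ <;> linarith
    _ ≤ 2 * (√((n : ℝ) + 1))⁻¹ + 2 * (√((n : ℝ) + 1))⁻¹ :=
        add_le_add head (sum_range_inv_add_one_mul_sqrt_le (by positivity) N)
    _ = 4 * (√((n : ℝ) + 1))⁻¹ := by ring

theorem ENNReal.tsum_mul_sq_le {ι : Type*} (f g : ι → ℝ≥0∞) :
    (∑' i, f i * g i) ^ 2 ≤ (∑' i, f i ^ 2) * ∑' i, g i ^ 2 := by
  let : MeasurableSpace ι := ⊤
  have holder := ENNReal.lintegral_mul_le_Lp_mul_Lq Measure.count Real.HolderConjugate.two_two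
    measurable_from_top.aemeasurable measurable_from_top.aemeasurable (f := f) (g := g)
  simp only [Pi.mul_apply, lintegral_count, ENNReal.rpow_ofNat] at holder
  calc _ ≤ ((∑' i, f i ^ 2) ^ (1 / 2 : ℝ) * (∑' i, g i ^ 2) ^ (1 / 2 : ℝ)) ^ 2 := by gcongr
    _ = _ := by
      rw [mul_pow, ← ENNReal.rpow_mul_natCast, ← ENNReal.rpow_mul_natCast]
      norm_num

theorem ENNReal.tsum_sq_le_tsum_mul_tsum_of_sq_le_mul {ι : Type*} {r f g : ι → ℝ≥0∞}
    (h : ∀ i, r i ^ 2 ≤ f i * g i) : (∑' i, r i) ^ 2 ≤ (∑' i, f i) * ∑' i, g i := by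
  have hsq : ∀ x : ℝ≥0∞, (x ^ (1 / 2 : ℝ)) ^ 2 = x := fun x => by
    rw [← ENNReal.rpow_mul_natCast]; norm_num
  have hr : ∀ i, r i ≤ f i ^ (1 / 2 : ℝ) * g i ^ (1 / 2 : ℝ) := fun i =>
    calc r i = (r i ^ 2) ^ (1 / 2 : ℝ) := by
          rw [← ENNReal.rpow_natCast, ← ENNReal.rpow_mul]; norm_num
      _ ≤ (f i * g i) ^ (1 / 2 : ℝ) := by gcongr; exact h i
      _ = _ := ENNReal.mul_rpow_of_nonneg _ _ (by norm_num)
  calc (∑' i, r i) ^ 2 ≤ (∑' i, f i ^ (1 / 2 : ℝ) * g i ^ (1 / 2 : ℝ)) ^ 2 := by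
        gcongr with i; exact hr i
    _ ≤ _ := (ENNReal.tsum_mul_sq_le _ _).trans_eq (by simp only [hsq])

theorem ENNReal.schur_test {ι κ : Type*} (K : ι → κ → ℝ≥0∞) {p : κ → ℝ≥0∞} {q : ι → ℝ≥0∞}
    {α β : ℝ≥0∞} (hp₀ : ∀ k, p k ≠ 0) (hp_top : ∀ k, p k ≠ ∞)
    (hrow : ∀ i, ∑' k, K i k * p k ≤ α * q i) (hcol : ∀ k, ∑' i, K i k * q i ≤ β * p k)
    (c : κ → ℝ≥0∞) : ∑' i, (∑' k, K i k * c k) ^ 2 ≤ α * β * ∑' k, c k ^ 2 := by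
  have hp : ∀ k, p k * (p k)⁻¹ = 1 := fun k => ENNReal.mul_inv_cancel (hp₀ k) (hp_top k)
  calc ∑' i, (∑' k, K i k * c k) ^ 2
      ≤ ∑' i, (∑' k, K i k * p k) * ∑' k, K i k * ((p k)⁻¹ * c k ^ 2) := by
        gcongr with i
        refine ENNReal.tsum_sq_le_tsum_mul_tsum_of_sq_le_mul fun k => le_of_eq ?_
        calc (K i k * c k) ^ 2 = K i k * (p k * (p k)⁻¹) * (K i k * c k ^ 2) := by
              rw [hp]; ring
          _ = _ := by ring
    _ ≤ ∑' i, α * q i * ∑' k, K i k * ((p k)⁻¹ * c k ^ 2) := by gcongr with i; exact hrow i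
    _ = α * ∑' k, (∑' i, K i k * q i) * ((p k)⁻¹ * c k ^ 2) := by
        simp_rw [← ENNReal.tsum_mul_right, ← ENNReal.tsum_mul_left]
        rw [ENNReal.tsum_comm]
        exact tsum_congr fun k => tsum_congr fun i => by ring
    _ ≤ α * ∑' k, β * p k * ((p k)⁻¹ * c k ^ 2) := by gcongr with k; exact hcol k
    _ = α * β * ∑' k, c k ^ 2 := by
        simp_rw [mul_assoc, ← mul_assoc (p _), hp, one_mul, ENNReal.tsum_mul_left]

lemma tsum_ofReal_inv_add_mul_inv_sqrt_le (n : ℕ) :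
    ∑' k : ℕ, ENNReal.ofReal ((n : ℝ) + k + 1)⁻¹ * ENNReal.ofReal (√((k : ℝ) + 1))⁻¹ ≤
      4 * ENNReal.ofReal (√((n : ℝ) + 1))⁻¹ := by
  refine ENNReal.tsum_le_of_sum_range_le fun N => ?_
  calc ∑ k ∈ range N, ENNReal.ofReal ((n : ℝ) + k + 1)⁻¹ * ENNReal.ofReal (√((k : ℝ) + 1))⁻¹
      = ENNReal.ofReal (∑ k ∈ range N, ((n : ℝ) + k + 1)⁻¹ * (√((k : ℝ) + 1))⁻¹) := by
        rw [ENNReal.ofReal_sum_of_nonneg fun k _ => by positivity]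
        exact sum_congr rfl fun k _ => (ENNReal.ofReal_mul (by positivity)).symm
    _ ≤ ENNReal.ofReal (4 * (√((n : ℝ) + 1))⁻¹) :=
        ENNReal.ofReal_le_ofReal (sum_range_inv_add_mul_inv_sqrt_le n N)
    _ = _ := by rw [ENNReal.ofReal_mul (by norm_num)]; norm_num

theorem hilbert_inequality (c : ℕ → ℝ≥0∞) :
    ∑' n : ℕ, (∑' k : ℕ, ENNReal.ofReal ((n : ℝ) + k + 1)⁻¹ * c k) ^ 2 ≤ 16 * ∑' k, c k ^ 2 := by
  have hcol (k : ℕ) : ∑' n : ℕ, ENNReal.ofReal ((n : ℝ) + k + 1)⁻¹ *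
      ENNReal.ofReal (√((n : ℝ) + 1))⁻¹ ≤ 4 * ENNReal.ofReal (√((k : ℝ) + 1))⁻¹ := by
    simpa only [add_comm (k : ℝ)] using tsum_ofReal_inv_add_mul_inv_sqrt_le k
  calc _ ≤ 4 * 4 * ∑' k, c k ^ 2 :=
        ENNReal.schur_test (fun n k : ℕ => ENNReal.ofReal ((n : ℝ) + k + 1)⁻¹)
          (fun k => (ENNReal.ofReal_pos.2 (by positivity)).ne') (fun _ => ENNReal.ofReal_ne_top)
          tsum_ofReal_inv_add_mul_inv_sqrt_le hcol c
    _ = 16 * ∑' k, c k ^ 2 := by norm_num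

lemma moment_nonneg (μ : Measure ℝ) (n : ℕ) : 0 ≤ moment μ n :=
  setIntegral_nonneg measurableSet_Ico fun _ ht => pow_nonneg ht.1 n

lemma add_one_mul_le_of_le_div_sq {x C : ℝ} {n k : ℕ} (hC : 0 ≤ C)
    (hx : x ≤ C / ((n + k : ℕ) + 1 : ℝ) ^ 2) : ((n : ℝ) + 1) * x ≤ C * ((n : ℝ) + k + 1)⁻¹ := by
  push_cast at hx
  calc ((n : ℝ) + 1) * x ≤ ((n : ℝ) + 1) * (C / ((n : ℝ) + k + 1) ^ 2) := by gcongr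
    _ ≤ ((n : ℝ) + k + 1) * (C / ((n : ℝ) + k + 1) ^ 2) := by
        gcongr; linarith [(Nat.cast_nonneg (α := ℝ) k)]
    _ = C * ((n : ℝ) + k + 1)⁻¹ := by field_simp

lemma add_one_mul_enorm_tsum_moment_mul_le {μ : Measure ℝ} {C : ℝ}
    (hC : 0 ≤ C) (hmC : ∀ m : ℕ, moment μ m ≤ C / ((m : ℝ) + 1) ^ 2) (a : ℕ → ℂ) (n : ℕ) :
    ((n : ℝ≥0∞) + 1) * ‖∑' k : ℕ, (moment μ (n + k) : ℂ) * a k‖ₑ ≤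
      ENNReal.ofReal C * ∑' k : ℕ, ENNReal.ofReal ((n : ℝ) + k + 1)⁻¹ * ‖a k‖ₑ := by
  calc ((n : ℝ≥0∞) + 1) * ‖∑' k : ℕ, (moment μ (n + k) : ℂ) * a k‖ₑ
      ≤ ((n : ℝ≥0∞) + 1) * ∑' k, ENNReal.ofReal (moment μ (n + k)) * ‖a k‖ₑ := by
        gcongr
        refine enorm_tsum_le_tsum_enorm.trans_eq (tsum_congr fun k => ?_)
        rw [enorm_mul, ← ofReal_norm, Complex.norm_real, Real.norm_of_nonneg (moment_nonneg μ _)]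
    _ ≤ _ := by
        simp_rw [← ENNReal.tsum_mul_left, ← mul_assoc]
        refine ENNReal.tsum_le_tsum fun k => mul_le_mul_left ?_ _
        rw [← ENNReal.ofReal_mul hC, ← ENNReal.ofReal_natCast, ← ENNReal.ofReal_one,
          ← ENNReal.ofReal_add (by positivity) zero_le_one, ← ENNReal.ofReal_mul (by positivity)]
        exact ENNReal.ofReal_le_ofReal
          (add_one_mul_le_of_le_div_sq hC (hmC (n + k)))

lemma tsum_sq_add_one_mul_enorm_tsum_moment_mul_le {μ : Measure ℝ} {C : ℝ}
    (hC : 0 ≤ C) (hmC : ∀ m : ℕ, moment μ m ≤ C / ((m : ℝ) + 1) ^ 2) (a : ℕ → ℂ) :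
    ∑' n : ℕ, (((n : ℝ≥0∞) + 1) * ‖∑' k : ℕ, (moment μ (n + k) : ℂ) * a k‖ₑ) ^ 2 ≤
      ENNReal.ofReal (16 * C ^ 2) * ∑' k, ‖a k‖ₑ ^ 2 := by
  calc ∑' n : ℕ, (((n : ℝ≥0∞) + 1) * ‖∑' k : ℕ, (moment μ (n + k) : ℂ) * a k‖ₑ) ^ 2
      ≤ ∑' n : ℕ, ENNReal.ofReal C ^ 2 *
          (∑' k : ℕ, ENNReal.ofReal ((n : ℝ) + k + 1)⁻¹ * ‖a k‖ₑ) ^ 2 := by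
        gcongr with n
        rw [← mul_pow]
        exact pow_le_pow_left₀ zero_le (add_one_mul_enorm_tsum_moment_mul_le hC hmC a n) 2
    _ ≤ ENNReal.ofReal C ^ 2 * (16 * ∑' k, ‖a k‖ₑ ^ 2) := by
        rw [ENNReal.tsum_mul_left]
        gcongr
        exact hilbert_inequality _
    _ = _ := by rw [ENNReal.ofReal_mul (by norm_num), ENNReal.ofReal_pow hC]; norm_num; ring

lemma ENNReal.tsum_toReal_le_mul_tsum_toReal {ι κ : Type*} {f : ι → ℝ≥0∞} {g : κ → ℝ≥0∞}
    {A : ℝ} (hA : 0 ≤ A) (hf : ∀ i, f i ≠ ∞) (hg : ∑' k, g k ≠ ∞)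
    (h : ∑' i, f i ≤ ENNReal.ofReal A * ∑' k, g k) :
    ∑' i, (f i).toReal ≤ A * ∑' k, (g k).toReal := by
  rw [← ENNReal.tsum_toReal_eq hf, ← ENNReal.tsum_toReal_eq (ENNReal.ne_top_of_tsum_ne_top hg),
    ← ENNReal.toReal_ofReal hA, ← ENNReal.toReal_mul]
  exact ENNReal.toReal_mono (by finiteness) h

theorem stmt14 (μ : Measure ℝ)
    (hmom : ∃ C > 0, ∀ m : ℕ, moment μ m ≤ C / ((m : ℝ) + 1) ^ 2) :
    ∃ C' > 0, ∀ a : ℕ → ℂ, Summable (fun k : ℕ => ‖a k‖ ^ 2) →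
      ∑' n : ℕ, ((n : ℝ) + 1) ^ 2 * ‖∑' k : ℕ, (moment μ (n + k) : ℂ) * a k‖ ^ 2 ≤
        C' * ∑' k : ℕ, ‖a k‖ ^ 2 := by
  obtain ⟨C, hC, hmC⟩ := hmom
  refine ⟨16 * C ^ 2, by positivity, fun a ha => ?_⟩
  have hfin : ∑' k, ‖a k‖ₑ ^ 2 ≠ ∞ := by
    simpa [ENNReal.ofReal_pow] using ha.tsum_ofReal_lt_top.ne
  simpa [ENNReal.toReal_add, mul_pow] using
    ENNReal.tsum_toReal_le_mul_tsum_toReal (by positivity) (fun n => by finiteness) hfin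
      (tsum_sq_add_one_mul_enorm_tsum_moment_mul_le hC.le hmC a)
end
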